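/- arXiv:1412.2359 — 3 statements merged into one kernel-verified Lean document; each statement's English description precedes it below -/
import Mathlib

section
/- Let H be a Hopf algebra over a field k, I ⊆ H a coideal right ideal, and B := H^{co H/I} the subalgebra of coaction invariants of the canonical right H/I-coaction ρ(h) = h(1) ⊗ π(h(2)) on H. Then the homogeneous H/I-extension B ⊆ H is Galois (i.e. the canonical map can: H ⊗_B H → H ⊗ H/I, h ⊗_B h' ↦ h h'(1) ⊗ π(h'(2)), is bijective) if and only if I = B⁺H, where B⁺ := B ∩ ker ε. -/
/-!
STATEMENT 0:  Let `H` be a Hopf algebra over a field `k`, `I ⊆ H` a coideal right ideal and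
`B := H^{co H/I}` the subalgebra of coaction invariants of the canonical right `H/I`-coaction
`ρ(h) = h₍₁₎ ⊗ π(h₍₂₎)` on `H`.  Then the homogeneous `H/I`-extension `B ⊆ H` is Galois, i.e. the
canonical map `can : H ⊗_B H → H ⊗ H/I`, `h ⊗_B h' ↦ h h'₍₁₎ ⊗ π(h'₍₂₎)`, is bijective, if and
only if `I = B⁺H` where `B⁺ = B ∩ ker ε`.

`H ⊗_B H` is realised as the quotient of `H ⊗[k] H` by the span of the elements
`(g b) ⊗ g' - g ⊗ (b g')` with `b ∈ B`, and "can is bijective" as the existence of a linear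
equivalence `(H ⊗[k] H)/rel ≃ H ⊗ H/I` through which the representative-level canonical map
factors.
-/

open TensorProduct

noncomputable section

variable (k : Type*) [Field k] (H : Type*) [Ring H] [HopfAlgebra k H]

/-- `I` is a coideal right ideal of `H`. -/
def IsCoidealRightIdeal (I : Submodule k H) : Prop :=
  (∀ x ∈ I, ∀ h : H, x * h ∈ I) ∧
  (∀ x ∈ I, Coalgebra.counit (R := k) x = (0 : k)) ∧
  (∀ x ∈ I, Coalgebra.comul (R := k) x ∈
    LinearMap.range (TensorProduct.map I.subtype (LinearMap.id (M := H))) ⊔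
      LinearMap.range (TensorProduct.map (LinearMap.id (M := H)) I.subtype))

/-- `b ∈ B = H^{co H/I}`:  `b₍₁₎ ⊗ π(b₍₂₎) = b ⊗ π(1)`. -/
def IsCoinvariant (I : Submodule k H) (b : H) : Prop :=
  (LinearMap.lTensor H I.mkQ) (Coalgebra.comul (R := k) b) = b ⊗ₜ[k] I.mkQ 1

/-- The subspace of `H ⊗ H` of relations defining `H ⊗_B H`. -/
def relB (I : Submodule k H) : Submodule k (H ⊗[k] H) :=
  Submodule.span k
    {x : H ⊗[k] H | ∃ g g' b : H, IsCoinvariant k H I b ∧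
      x = (g * b) ⊗ₜ[k] g' - g ⊗ₜ[k] (b * g')}

/-- The representative-level canonical map `H ⊗ H → H ⊗ H/I`, `h ⊗ h' ↦ h h'₍₁₎ ⊗ π(h'₍₂₎)`. -/
def canTilde (I : Submodule k H) : H ⊗[k] H →ₗ[k] H ⊗[k] (H ⧸ I) :=
  (LinearMap.rTensor (H ⧸ I) (LinearMap.mul' k H)).comp
    (((TensorProduct.assoc k H H (H ⧸ I)).symm.toLinearMap).comp
      (LinearMap.lTensor H ((LinearMap.lTensor H I.mkQ).comp (Coalgebra.comul (R := k)))))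

/-- The subspace `B⁺H`, spanned by products `b h` with `b ∈ B`, `ε(b) = 0`. -/
def BplusH (I : Submodule k H) : Submodule k H :=
  Submodule.span k
    {x : H | ∃ b h : H, IsCoinvariant k H I b ∧ Coalgebra.counit (R := k) b = (0 : k) ∧
      x = b * h}

end

/-!
Let `β : H ⊗ H → H ⊗ H`, `h ⊗ h' ↦ h h'₍₁₎ ⊗ h'₍₂₎`; it is bijective with inverse
`h ⊗ h' ↦ h S(h'₍₁₎) ⊗ h'₍₂₎`, and `can` is induced by `(id ⊗ π) ∘ β`. So `can` is always
surjective, it kills the relations of `⊗_B` because `H ⧸ I` is a right `H`-module, and it is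
injective iff every element of `β⁻¹(H ⊗ I)` is a relation.

If `I = B⁺H`, write `Δ b ∈ H ⊗ B` (coassociativity plus flatness over a field); then
`β⁻¹(h ⊗ b g) = h S(g₁) S(b₁) ⊗ b₂ g₂ ≡ h S(g₁) S(b₁) b₂ ⊗ g₂ = ε(b) h S(g₁) ⊗ g₂ = 0`.
Conversely, `x ⊗ y ↦ ε(x) y` induces a map `H ⊗_B H → H ⧸ B⁺H` sending `β⁻¹(1 ⊗ x)` to `x`,
so `x ∈ I` forces `x ∈ B⁺H`. The inclusion `B⁺H ⊆ I` always holds, since `ε(b) = 0` gives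
`π(b) = ε(b) π(1) = 0` for `b ∈ B`.
-/

namespace Submodule

theorem exists_quotient_equiv_comp_mk_iff {R M N : Type*} [Ring R] [AddCommGroup M] [Module R M]
    [AddCommGroup N] [Module R N] (p : Submodule R M) (f : M →ₗ[R] N) :
    (∃ e : (M ⧸ p) ≃ₗ[R] N, ∀ x, e (Quotient.mk x) = f x) ↔
      p = LinearMap.ker f ∧ Function.Surjective f := by
  constructor
  · rintro ⟨e, he⟩
    have hf : f = e.toLinearMap ∘ₗ p.mkQ := LinearMap.ext fun x => (he x).symm
    subst hf
    refine ⟨?_, e.surjective.comp p.mkQ_surjective⟩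
    rw [LinearMap.ker_comp, LinearEquiv.ker, comap_bot, ker_mkQ]
  · rintro ⟨rfl, hf⟩
    exact ⟨f.quotKerEquivOfSurjective hf, fun _ => rfl⟩

end Submodule

namespace HopfAlgebra

open Coalgebra LinearMap

variable (R H : Type*) [CommSemiring R] [Semiring H] [HopfAlgebra R H]

def galoisMap : H ⊗[R] H →ₗ[R] H ⊗[R] H :=
  rTensor H (mul' R H) ∘ₗ (TensorProduct.assoc R H H H).symm.toLinearMap ∘ₗ lTensor H comul

def galoisInv : H ⊗[R] H →ₗ[R] H ⊗[R] H :=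
  rTensor H (mul' R H) ∘ₗ (TensorProduct.assoc R H H H).symm.toLinearMap ∘ₗ
    lTensor H (rTensor H (antipode R) ∘ₗ comul)

variable {R H}

theorem galoisMap_tmul (p q : H) {ι : Type*} (r : Repr R q ι) :
    galoisMap R H (p ⊗ₜ q) = ∑ i ∈ r.index, (p * r.left i) ⊗ₜ r.right i := by
  simp [galoisMap, ← r.eq, tmul_sum]

theorem galoisInv_tmul (p q : H) {ι : Type*} (r : Repr R q ι) :
    galoisInv R H (p ⊗ₜ q) = ∑ i ∈ r.index, (p * antipode R (r.left i)) ⊗ₜ r.right i := by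
  simp [galoisInv, ← r.eq, tmul_sum]

theorem galoisMap_galoisInv (x : H ⊗[R] H) : galoisMap R H (galoisInv R H x) = x := by
  induction x using TensorProduct.induction_on with
  | zero => simp
  | add x y hx hy => rw [map_add, map_add, hx, hy]
  | tmul p q =>
    let r := ℛ R q
    have h := congr(rTensor H (mul' R H ∘ₗ map (mulLeft R p ∘ₗ antipode R) LinearMap.id)
      ((TensorProduct.assoc R H H H).symm
        $(sum_tmul_tmul_eq r (fun i => ℛ R (r.left i)) (fun i => ℛ R (r.right i)))))
    simp only [map_sum, TensorProduct.assoc_symm_tmul, rTensor_tmul, coe_comp,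
      Function.comp_apply, map_tmul, mul'_apply, mulLeft_apply, id_apply, mul_assoc] at h
    rw [galoisInv_tmul p q r, map_sum]
    simp only [galoisMap_tmul _ _ (ℛ R (r.right _)), mul_assoc]
    rw [← h]
    simp only [← sum_tmul, ← Finset.mul_sum, sum_antipode_mul_eq_smul, Algebra.mul_smul_comm,
      mul_one, smul_tmul]
    rw [← tmul_sum, sum_counit_smul]

theorem galoisInv_galoisMap (x : H ⊗[R] H) : galoisInv R H (galoisMap R H x) = x := by
  induction x using TensorProduct.induction_on with
  | zero => simp
  | add x y hx hy => rw [map_add, map_add, hx, hy]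
  | tmul p q =>
    let r := ℛ R q
    have h := congr(rTensor H (mul' R H ∘ₗ map (mulLeft R p) (antipode R))
      ((TensorProduct.assoc R H H H).symm
        $(sum_tmul_tmul_eq r (fun i => ℛ R (r.left i)) (fun i => ℛ R (r.right i)))))
    simp only [map_sum, TensorProduct.assoc_symm_tmul, rTensor_tmul, coe_comp,
      Function.comp_apply, map_tmul, mul'_apply, mulLeft_apply, mul_assoc] at h
    rw [galoisMap_tmul p q r, map_sum]
    simp only [galoisInv_tmul _ _ (ℛ R (r.right _)), mul_assoc]
    rw [← h]
    simp only [← sum_tmul, ← Finset.mul_sum, sum_mul_antipode_eq_smul, Algebra.mul_smul_comm,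
      mul_one, smul_tmul]
    rw [← tmul_sum, sum_counit_smul]

end HopfAlgebra

section

open Coalgebra HopfAlgebra LinearMap

variable {k H : Type*} [Field k] [Ring H] [HopfAlgebra k H] (I : Submodule k H)

theorem canTilde_eq : canTilde k H I = lTensor H I.mkQ ∘ₗ galoisMap k H := by
  refine TensorProduct.ext' fun p q => ?_
  simp [canTilde, galoisMap, ← (ℛ k q).eq, tmul_sum]

theorem canTilde_tmul (p q : H) {ι : Type*} (r : Repr k q ι) :
    canTilde k H I (p ⊗ₜ q) = ∑ i ∈ r.index, (p * r.left i) ⊗ₜ I.mkQ (r.right i) := by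
  simp [canTilde_eq, galoisMap_tmul p q r]

theorem canTilde_surjective : Function.Surjective (canTilde k H I) := by
  rw [canTilde_eq, coe_comp]
  exact (lTensor_surjective H I.mkQ_surjective).comp
    (Function.RightInverse.surjective galoisMap_galoisInv)

theorem canTilde_galoisInv (x : H ⊗[k] H) :
    canTilde k H I (galoisInv k H x) = lTensor H I.mkQ x := by
  rw [canTilde_eq, comp_apply, galoisMap_galoisInv]

theorem mem_ker_canTilde_iff (z : H ⊗[k] H) :
    z ∈ ker (canTilde k H I) ↔ galoisMap k H z ∈ range (lTensor H I.subtype) := by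
  rw [canTilde_eq, mem_ker, comp_apply, ← mem_ker, lTensor_mkQ]

def coactionDiff : H →ₗ[k] H ⊗[k] (H ⧸ I) :=
  lTensor H I.mkQ ∘ₗ comul - (TensorProduct.mk k H (H ⧸ I)).flip (I.mkQ 1)

theorem isCoinvariant_iff_mem_ker {b : H} :
    IsCoinvariant k H I b ↔ b ∈ ker (coactionDiff I) := by
  rw [mem_ker, coactionDiff, LinearMap.sub_apply, sub_eq_zero]
  rfl

theorem isCoinvariant_one : IsCoinvariant k H I 1 := by
  simp [IsCoinvariant, Algebra.TensorProduct.one_def]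

theorem IsCoinvariant.sub_counit_smul_one {b : H} (hb : IsCoinvariant k H I b) :
    IsCoinvariant k H I (b - counit (R := k) b • 1) := by
  rw [isCoinvariant_iff_mem_ker] at *
  exact sub_mem hb (Submodule.smul_mem _ _ ((isCoinvariant_iff_mem_ker I).mp (isCoinvariant_one I)))

theorem mem_of_isCoinvariant_of_counit_eq_zero {b : H} (hb : IsCoinvariant k H I b)
    (hε : counit (R := k) b = 0) : b ∈ I := by
  have h := congr(TensorProduct.lid k (H ⧸ I) (rTensor (H ⧸ I) counit $hb))
  rwa [← comp_apply (rTensor _ _), rTensor_comp_lTensor, ← lTensor_comp_rTensor, comp_apply,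
    rTensor_counit_comul, lTensor_tmul, rTensor_tmul,
    hε, lid_tmul, lid_tmul, one_smul, zero_smul, Submodule.mkQ_apply,
    Submodule.Quotient.mk_eq_zero] at h

theorem BplusH_le (hI : ∀ x ∈ I, ∀ h : H, x * h ∈ I) : BplusH k H I ≤ I := by
  rw [BplusH, Submodule.span_le]
  rintro _ ⟨b, h, hb, hε, rfl⟩
  exact hI b (mem_of_isCoinvariant_of_counit_eq_zero I hb hε) h

theorem lTensor_coactionDiff_comul {b : H} (hb : IsCoinvariant k H I b) :
    lTensor H (coactionDiff I) (comul b) = 0 := by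
  have hflip (t : H ⊗[k] H) : lTensor H ((TensorProduct.mk k H (H ⧸ I)).flip (I.mkQ 1)) t =
      TensorProduct.assoc k H H (H ⧸ I) (t ⊗ₜ I.mkQ 1) := by
    induction t using TensorProduct.induction_on with
    | zero => simp
    | tmul x y => rfl
    | add x y hx hy => rw [map_add, hx, hy, add_tmul, map_add]
  rw [coactionDiff, lTensor_sub, LinearMap.sub_apply, sub_eq_zero, hflip, lTensor_comp,
    comp_apply, ← coassoc_apply]
  change map id (map id I.mkQ) _ = _
  rw [map_map_assoc, map_id, ← lTensor, ← comp_apply, lTensor_comp_rTensor, ← rTensor_comp_lTensor,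
    comp_apply]
  exact congr(TensorProduct.assoc k H H (H ⧸ I) (rTensor (H ⧸ I) comul $hb))

theorem IsCoinvariant.exists_repr {b : H} (hb : IsCoinvariant k H I b) :
    ∃ r : Repr k b (H × H), ∀ i ∈ r.index, IsCoinvariant k H I (r.right i) := by
  obtain ⟨w, hw⟩ := (Module.Flat.lTensor_exact H (exact_subtype_ker_map (coactionDiff I))
    (comul b)).mp (lTensor_coactionDiff_comul I hb)
  obtain ⟨s, rfl⟩ := TensorProduct.exists_finset w
  let e : H × ker (coactionDiff I) ↪ H × H :=
    (Function.Embedding.refl H).prodMap (Function.Embedding.subtype _)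
  refine ⟨⟨s.map e, Prod.fst, Prod.snd, ?_⟩, ?_⟩
  · simpa [e, Finset.sum_map, map_sum] using hw
  · simp only [Finset.mem_map]
    rintro _ ⟨j, -, rfl⟩
    exact (isCoinvariant_iff_mem_ker I).mpr j.2.2

theorem canTilde_mul_tmul (hI : ∀ x ∈ I, ∀ h : H, x * h ∈ I) {b : H}
    (hb : IsCoinvariant k H I b) (g g' : H) :
    canTilde k H I ((g * b) ⊗ₜ g') = canTilde k H I (g ⊗ₜ (b * g')) := by
  let rb := ℛ k b
  let rg := ℛ k g'
  -- `T j (x ⊗ π y) = g x g'ⱼ ⊗ π (y g''ⱼ)` is well defined as `I` is a right ideal; the two sides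
  -- are `∑ⱼ T j (b ⊗ π 1)` and `∑ⱼ T j (ρ b)`.
  let T (j : H × H) : H ⊗[k] (H ⧸ I) →ₗ[k] H ⊗[k] (H ⧸ I) :=
    map (mulLeft k g ∘ₗ mulRight k (rg.left j)) (I.mapQ I (mulRight k (rg.right j))
      fun x hx => hI x hx _)
  have hT (j : H × H) : T j (lTensor H I.mkQ (comul b)) = T j (b ⊗ₜ I.mkQ 1) := by rw [hb]
  rw [← rb.eq] at hT
  simp only [T, map_sum, lTensor_tmul, map_tmul, coe_comp, Function.comp_apply, mulLeft_apply,
    mulRight_apply] at hT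
  rw [canTilde_tmul I _ _ rg, canTilde_tmul I _ _ (rb.mul rg), Repr.mul_index,
    Finset.sum_product, Finset.sum_comm]
  refine Finset.sum_congr rfl fun j _ => ?_
  rw [mul_assoc, ← one_mul (rg.right j)]
  exact (hT j).symm

theorem relB_le_ker_canTilde (hI : ∀ x ∈ I, ∀ h : H, x * h ∈ I) :
    relB k H I ≤ ker (canTilde k H I) := by
  rw [relB, Submodule.span_le]
  rintro _ ⟨g, g', b, hb, rfl⟩
  rw [SetLike.mem_coe, mem_ker, map_sub, canTilde_mul_tmul I hI hb, sub_self]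

theorem mkQ_mul_tmul {b : H} (hb : IsCoinvariant k H I b) (g g' : H) :
    (relB k H I).mkQ ((g * b) ⊗ₜ g') = (relB k H I).mkQ (g ⊗ₜ (b * g')) :=
  (Submodule.Quotient.eq _).mpr (Submodule.subset_span ⟨g, g', b, hb, rfl⟩)

theorem galoisInv_tmul_mul_mem_relB {b : H} (hb : IsCoinvariant k H I b)
    (hε : counit (R := k) b = 0) (h g : H) :
    galoisInv k H (h ⊗ₜ (b * g)) ∈ relB k H I := by
  obtain ⟨rb, hrb⟩ := IsCoinvariant.exists_repr I hb
  let rg := ℛ k g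
  rw [← Submodule.Quotient.mk_eq_zero, ← Submodule.mkQ_apply]
  calc (relB k H I).mkQ (galoisInv k H (h ⊗ₜ (b * g)))
      = ∑ j ∈ rg.index, ∑ i ∈ rb.index, (relB k H I).mkQ
          ((h * antipode k (rg.left j) * antipode k (rb.left i)) ⊗ₜ (rb.right i * rg.right j)) := by
        rw [galoisInv_tmul _ _ (rb.mul rg), map_sum, Repr.mul_index, Finset.sum_product,
          Finset.sum_comm]
        simp only [Repr.mul_left, Repr.mul_right, antipode_mul_antidistrib, ← mul_assoc]
    _ = (relB k H I).mkQ (∑ j ∈ rg.index, (h * antipode k (rg.left j) *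
          ∑ i ∈ rb.index, antipode k (rb.left i) * rb.right i) ⊗ₜ rg.right j) := by
        simp only [Finset.mul_sum, sum_tmul, map_sum]
        refine Finset.sum_congr rfl fun j _ => Finset.sum_congr rfl fun i hi => ?_
        rw [← mkQ_mul_tmul I (hrb i hi), mul_assoc]
    _ = 0 := by
        simp [sum_antipode_mul_eq_smul, hε]

theorem galoisInv_tmul_mem_relB {x : H} (hx : x ∈ BplusH k H I) (h : H) :
    galoisInv k H (h ⊗ₜ x) ∈ relB k H I := by
  have hle : BplusH k H I ≤ (relB k H I).comap (galoisInv k H ∘ₗ TensorProduct.mk k H H h) := by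
    rw [BplusH, Submodule.span_le]
    rintro _ ⟨b, g, hb, hε, rfl⟩
    exact galoisInv_tmul_mul_mem_relB I hb hε h g
  exact hle hx

theorem ker_canTilde_le_relB (hIB : I ≤ BplusH k H I) : ker (canTilde k H I) ≤ relB k H I := by
  intro z hz
  obtain ⟨w, hw⟩ := (mem_ker_canTilde_iff I z).mp hz
  rw [← galoisInv_galoisMap z, ← hw]
  clear hw
  induction w using TensorProduct.induction_on with
  | zero => simp
  | tmul h x => exact galoisInv_tmul_mem_relB I (hIB x.2) h
  | add x y hx hy => rw [map_add, map_add]; exact add_mem hx hy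

def counitTensorMkQ : H ⊗[k] H →ₗ[k] H ⧸ BplusH k H I :=
  (BplusH k H I).mkQ ∘ₗ lift (lsmul k H ∘ₗ counit)

theorem counitTensorMkQ_tmul (x y : H) :
    counitTensorMkQ I (x ⊗ₜ y) = (BplusH k H I).mkQ (counit (R := k) x • y) := rfl

theorem relB_le_ker_counitTensorMkQ : relB k H I ≤ ker (counitTensorMkQ I) := by
  rw [relB, Submodule.span_le]
  rintro _ ⟨g, g', b, hb, rfl⟩
  have hmem : (b - counit (R := k) b • 1) * g' ∈ BplusH k H I :=
    Submodule.subset_span ⟨_, g', IsCoinvariant.sub_counit_smul_one I hb, by simp, rfl⟩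
  have hdiff : counit (R := k) (g * b) • g' - counit (R := k) g • (b * g') =
      -counit (R := k) g • ((b - counit (R := k) b • 1) * g') := by
    rw [Bialgebra.counit_mul, sub_mul, smul_mul_assoc, one_mul]
    module
  rw [SetLike.mem_coe, mem_ker, map_sub, counitTensorMkQ_tmul, counitTensorMkQ_tmul, ← map_sub,
    hdiff, Submodule.mkQ_apply, Submodule.Quotient.mk_eq_zero]
  exact Submodule.smul_mem _ _ hmem

theorem counitTensorMkQ_galoisInv_one_tmul (x : H) :
    counitTensorMkQ I (galoisInv k H (1 ⊗ₜ x)) = (BplusH k H I).mkQ x := by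
  rw [galoisInv_tmul 1 x (ℛ k x), map_sum]
  simp only [one_mul, counitTensorMkQ_tmul, counit_antipode]
  rw [← map_sum, sum_counit_smul]

theorem le_BplusH_of_ker_canTilde_le_relB (h : ker (canTilde k H I) ≤ relB k H I) :
    I ≤ BplusH k H I := by
  intro x hx
  have hker : galoisInv k H (1 ⊗ₜ x) ∈ ker (canTilde k H I) := by
    rw [mem_ker, canTilde_galoisInv, lTensor_tmul, Submodule.mkQ_apply,
      (Submodule.Quotient.mk_eq_zero I).mpr hx, tmul_zero]
  have h0 := relB_le_ker_counitTensorMkQ I (h hker)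
  rwa [mem_ker, counitTensorMkQ_galoisInv_one_tmul, Submodule.mkQ_apply,
    Submodule.Quotient.mk_eq_zero] at h0

end

theorem homogeneous_extension_galois_iff
    {k : Type*} [Field k] {H : Type*} [Ring H] [HopfAlgebra k H]
    (I : Submodule k H) (hI : IsCoidealRightIdeal k H I) :
    (∃ e : ((H ⊗[k] H) ⧸ relB k H I) ≃ₗ[k] H ⊗[k] (H ⧸ I),
        ∀ x : H ⊗[k] H, e (Submodule.Quotient.mk x) = canTilde k H I x)
      ↔ I = BplusH k H I := by
  rw [Submodule.exists_quotient_equiv_comp_mk_iff, and_iff_left (canTilde_surjective I)]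
  constructor
  · intro h
    exact le_antisymm (le_BplusH_of_ker_canTilde_le_relB I h.ge) (BplusH_le I hI.1)
  · intro h
    exact le_antisymm (relB_le_ker_canTilde I hI.1) (ker_canTilde_le_relB I h.le)
end

section
/- Let H be a Hopf algebra over a field k. Then H, equipped with the left adjoint H-action h ▷ m := h(2) m S(h(1)) and the right H-coaction given by the comultiplication Δ, is a left-right stable anti-Yetter–Drinfeld module over H; explicitly, for all h, m ∈ H: Δ(h ▷ m) = (h(2) ▷ m(1)) ⊗ h(3) m(2) S(h(1)) (anti-Yetter–Drinfeld compatibility), and m(2) ▷ m(1) = m (stability). -/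
/-!
The antipode is an anti-coalgebra map, `Δ (S h) = S h₂ ⊗ S h₁`: both `Δ ∘ S` and
`(S ⊗ S) ∘ τ ∘ Δ` are convolution inverses of `Δ`, on the right and on the left respectively.
Since `Δ` is multiplicative, `Δ (h₂ m S h₁) = h₂₁ m₁ S h₁₂ ⊗ h₂₂ m₂ S h₁₁`, and coassociativity
rewrites the four-fold coproduct `h₁₁ ⊗ h₁₂ ⊗ h₂₁ ⊗ h₂₂` as `h₁ ⊗ h₂₁₁ ⊗ h₂₁₂ ⊗ h₂₂`, which is the
anti-Yetter–Drinfeld identity. Stability is coassociativity followed by the antipode axiom: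
`m₂₂ m₁ S m₂₁ = m₂ m₁₁ S m₁₂ = m₂ ε(m₁) = m`.
-/

/-- The December 2024 Mathlib `Coalgebra.Repr`, whose indexing type `ι` was a bundled field;
current Mathlib makes `ι` a parameter instead. -/
structure Coalgebra.ReprBundled (R : Type*) {A : Type*}
    [CommSemiring R] [AddCommMonoid A] [Module R A] [CoalgebraStruct R A] (a : A) where
  /-- the indexing type of a representation of `comul a` -/
  {ι : Type*}
  /-- the finite indexing set of a representation of `comul a` -/
  (index : Finset ι)
  /-- the first coordinate of a representation of `comul a` -/
  (left : ι → A)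
  /-- the second coordinate of a representation of `comul a` -/
  (right : ι → A)
  /-- `comul a` is equal to a finite sum of some pure tensors -/
  (eq : ∑ i ∈ index, left i ⊗ₜ[R] right i = CoalgebraStruct.comul a)

open Coalgebra TensorProduct

namespace Coalgebra

variable {R A : Type*} [CommSemiring R] [AddCommMonoid A] [Module R A]

def ReprBundled.toRepr [CoalgebraStruct R A] {a : A} (r : ReprBundled R a) : Repr R a r.ι :=
  ⟨r.index, r.left, r.right, r.eq⟩

variable [Coalgebra R A] {a : A} {ι : Type*} {κ Λ : ι → Type*} {Μ : ∀ i, Λ i → Type*}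

lemma sum_tmul_tmul_tmul_eq (repr : Repr R a ι)
    (a₁ : ∀ i, Repr R (repr.left i) (κ i)) (a₂ : ∀ i, Repr R (repr.right i) (Λ i))
    (a₂₁ : ∀ i j, Repr R ((a₂ i).left j) (Μ i j)) :
    ∑ i ∈ repr.index, ∑ j ∈ (a₁ i).index, ∑ l ∈ (a₂ i).index,
      (a₁ i).left j ⊗ₜ[R] ((a₁ i).right j ⊗ₜ[R] ((a₂ i).left l ⊗ₜ[R] (a₂ i).right l)) =
    ∑ i ∈ repr.index, ∑ j ∈ (a₂ i).index, ∑ l ∈ (a₂₁ i j).index,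
      repr.left i ⊗ₜ[R] ((a₂₁ i j).left l ⊗ₜ[R] ((a₂₁ i j).right l ⊗ₜ[R] (a₂ i).right j)) := by
  calc _ = LinearMap.lTensor A (LinearMap.lTensor A comul) (∑ i ∈ repr.index, ∑ j ∈ (a₁ i).index,
          (a₁ i).left j ⊗ₜ[R] ((a₁ i).right j ⊗ₜ[R] repr.right i)) := by
        simp only [map_sum, LinearMap.lTensor_tmul, ← (a₂ _).eq, tmul_sum]
    _ = LinearMap.lTensor A (LinearMap.lTensor A comul) (∑ i ∈ repr.index, ∑ j ∈ (a₂ i).index,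
          repr.left i ⊗ₜ[R] ((a₂ i).left j ⊗ₜ[R] (a₂ i).right j)) := by
        rw [sum_tmul_tmul_eq repr a₁ a₂]
    _ = ∑ i ∈ repr.index, repr.left i ⊗ₜ[R] ∑ j ∈ (a₂ i).index,
          (a₂ i).left j ⊗ₜ[R] comul (R := R) ((a₂ i).right j) := by
        simp only [map_sum, LinearMap.lTensor_tmul, tmul_sum]
    _ = _ := by
        refine Finset.sum_congr rfl fun i _ => ?_
        simp_rw [← tmul_sum, sum_tmul_tmul_eq (a₂ i) (a₂₁ i) (fun j => ℛ R ((a₂ i).right j)),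
          ← tmul_sum, (ℛ R _).eq]

end Coalgebra

namespace HopfAlgebra

open LinearMap WithConv

variable {R A : Type*} [CommSemiring R] [Semiring A] [HopfAlgebra R A]

variable (R A) in
noncomputable def antipodeSwap : A ⊗[R] A →ₗ[R] A ⊗[R] A :=
  map (antipode R) (antipode R) ∘ₗ (TensorProduct.comm R A A).toLinearMap

@[simp]
lemma antipodeSwap_tmul (a b : A) : antipodeSwap R A (a ⊗ₜ b) = antipode R b ⊗ₜ antipode R a :=
  rfl

lemma antipodeSwap_comp_comul_convMul_comul :
    toConv (antipodeSwap R A ∘ₗ comul) * toConv (comul (R := R) (A := A)) = 1 := by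
  ext x
  let r := ℛ R x
  let w i := ℛ R (r.left i)
  let s i := ℛ R (r.right i)
  let t i j := ℛ R ((s i).left j)
  have coassoc := congr(mul' R (A ⊗[R] A) (map (antipodeSwap R A) .id
    ((TensorProduct.assoc R A A (A ⊗[R] A)).symm $(sum_tmul_tmul_tmul_eq r w s t))))
  simp only [map_sum, TensorProduct.assoc_symm_tmul, TensorProduct.map_tmul, antipodeSwap_tmul,
    id_apply, mul'_apply, Algebra.TensorProduct.tmul_mul_tmul] at coassoc
  rw [r.convMul_apply]
  calc _ = ∑ i ∈ r.index, ∑ a ∈ (w i).index, ∑ b ∈ (s i).index,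
          (antipode R ((w i).right a) * (s i).left b) ⊗ₜ[R]
            (antipode R ((w i).left a) * (s i).right b) := by
        simp only [coe_comp, Function.comp_apply, ← (w _).eq, ← (s _).eq, map_sum,
          antipodeSwap_tmul, Finset.sum_mul_sum, Algebra.TensorProduct.tmul_mul_tmul]
    _ = ∑ i ∈ r.index, ∑ j ∈ (s i).index, ∑ l ∈ (t i j).index,
          (antipode R ((t i j).left l) * (t i j).right l) ⊗ₜ[R]
            (antipode R (r.left i) * (s i).right j) := coassoc
    _ = ∑ i ∈ r.index, ∑ j ∈ (s i).index,
          (counit (R := R) ((s i).left j) • (1 : A)) ⊗ₜ[R]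
            (antipode R (r.left i) * (s i).right j) := by
        simp only [← sum_tmul, sum_antipode_mul_eq_algebraMap_counit,
          Algebra.algebraMap_eq_smul_one]
    _ = ∑ i ∈ r.index, (1 : A) ⊗ₜ[R] (antipode R (r.left i) * r.right i) := by
        simp only [smul_tmul, ← mul_smul_comm, ← tmul_sum, ← Finset.mul_sum, sum_counit_smul]
    _ = (1 : WithConv (A →ₗ[R] A ⊗[R] A)) x := by
        rw [← tmul_sum, sum_antipode_mul_eq_algebraMap_counit, convOne_apply,
          Algebra.TensorProduct.algebraMap_apply']

lemma comul_comp_antipode : comul ∘ₗ antipode R = antipodeSwap R A ∘ₗ comul :=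
  congr(ofConv $(left_inv_eq_right_inv antipodeSwap_comp_comul_convMul_comul
    LinearMap.comul_right_inv)).symm

lemma comul_antipode {a : A} {ι : Type*} (repr : Repr R a ι) :
    comul (antipode R a) =
      ∑ i ∈ repr.index, antipode R (repr.right i) ⊗ₜ[R] antipode R (repr.left i) := by
  simpa only [coe_comp, Function.comp_apply, ← repr.eq, map_sum, antipodeSwap_tmul] using
    LinearMap.congr_fun (comul_comp_antipode (R := R) (A := A)) a

variable {ι ν : Type*} {κ : ι → Type*} {Μ : ∀ i, κ i → Type*}

theorem comul_sum_mul_mul_antipode {h m : A} (r : Repr R h ι) (s : ∀ i, Repr R (r.right i) (κ i))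
    (t : ∀ i j, Repr R ((s i).left j) (Μ i j)) (q : Repr R m ν) :
    comul (∑ i ∈ r.index, r.right i * m * antipode R (r.left i)) =
      ∑ i ∈ r.index, ∑ j ∈ (s i).index, ∑ l ∈ (t i j).index, ∑ p ∈ q.index,
        ((t i j).right l * q.left p * antipode R ((t i j).left l)) ⊗ₜ[R]
          ((s i).right j * q.right p * antipode R (r.left i)) := by
  let w i := ℛ R (r.left i)
  have coassoc := congr(mul' R (A ⊗[R] A) (map (mulRight R (comul m)) (antipodeSwap R A)
    (TensorProduct.comm R _ _ ((TensorProduct.assoc R A A (A ⊗[R] A)).symm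
      $(sum_tmul_tmul_tmul_eq r w s t)))))
  simp only [map_sum, TensorProduct.assoc_symm_tmul, TensorProduct.comm_tmul,
    TensorProduct.map_tmul, antipodeSwap_tmul, mulRight_apply, mul'_apply] at coassoc
  calc _ = ∑ i ∈ r.index, comul (r.right i) * comul m * comul (antipode R (r.left i)) := by
        simp only [map_sum, Bialgebra.comul_mul]
    _ = ∑ i ∈ r.index, ∑ a ∈ (w i).index, ∑ b ∈ (s i).index,
          ((s i).left b ⊗ₜ[R] (s i).right b) * comul m *
            (antipode R ((w i).right a) ⊗ₜ[R] antipode R ((w i).left a)) := by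
        simp only [comul_antipode (w _), ← (s _).eq, Finset.sum_mul, Finset.mul_sum]
    _ = ∑ i ∈ r.index, ∑ j ∈ (s i).index, ∑ l ∈ (t i j).index,
          ((t i j).right l ⊗ₜ[R] (s i).right j) * comul m *
            (antipode R ((t i j).left l) ⊗ₜ[R] antipode R (r.left i)) := coassoc
    _ = _ := by
        simp only [← q.eq, Finset.sum_mul, Finset.mul_sum, Algebra.TensorProduct.tmul_mul_tmul]

theorem sum_mul_mul_antipode_eq {m : A} (q : Repr R m ι) (u : ∀ i, Repr R (q.right i) (κ i)) :
    ∑ i ∈ q.index, ∑ j ∈ (u i).index, (u i).right j * q.left i * antipode R ((u i).left j) = m := by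
  let w i := ℛ R (q.left i)
  have coassoc := congr(mul' R A (TensorProduct.comm R _ _
    (map (mul' R A ∘ₗ lTensor A (antipode R)) .id
      ((TensorProduct.assoc R A A A).symm $(sum_tmul_tmul_eq q w u)))))
  simp only [map_sum, TensorProduct.assoc_symm_tmul, TensorProduct.comm_tmul,
    TensorProduct.map_tmul, LinearMap.comp_apply, lTensor_tmul, id_apply, mul'_apply] at coassoc
  calc _ = ∑ i ∈ q.index, ∑ j ∈ (u i).index,
          (u i).right j * (q.left i * antipode R ((u i).left j)) := by
        simp only [mul_assoc]
    _ = ∑ i ∈ q.index, ∑ j ∈ (w i).index,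
          q.right i * ((w i).left j * antipode R ((w i).right j)) := coassoc.symm
    _ = m := by
        simp only [← Finset.mul_sum, sum_mul_antipode_eq_algebraMap_counit, ← Algebra.commutes,
          ← Algebra.smul_def, sum_counit_smul]

end HopfAlgebra

theorem adH_is_SAYD {k H : Type*} [Field k] [Ring H] [HopfAlgebra k H] :
    -- anti-Yetter–Drinfeld compatibility:
    (∀ (h m : H) (r : Coalgebra.ReprBundled k h) (s : ∀ i : r.ι, Coalgebra.ReprBundled k (r.right i))
        (t : ∀ (i : r.ι) (j : (s i).ι), Coalgebra.ReprBundled k ((s i).left j))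
        (q : Coalgebra.ReprBundled k m),
      Coalgebra.comul (R := k)
          (∑ i ∈ r.index, r.right i * m * HopfAlgebra.antipode (R := k) (r.left i)) =
        ∑ i ∈ r.index, ∑ j ∈ (s i).index, ∑ l ∈ (t i j).index, ∑ p ∈ q.index,
          ((t i j).right l * q.left p * HopfAlgebra.antipode (R := k) ((t i j).left l)) ⊗ₜ[k]
            ((s i).right j * q.right p * HopfAlgebra.antipode (R := k) (r.left i)))
    ∧
    -- stability:
    (∀ (m : H) (q : Coalgebra.ReprBundled k m) (u : ∀ i : q.ι, Coalgebra.ReprBundled k (q.right i)),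
      ∑ i ∈ q.index, ∑ j ∈ (u i).index,
          (u i).right j * q.left i * HopfAlgebra.antipode (R := k) ((u i).left j) = m) :=
  ⟨fun _ _ r s t q => HopfAlgebra.comul_sum_mul_mul_antipode r.toRepr (fun i => (s i).toRepr)
      (fun i j => (t i j).toRepr) q.toRepr,
    fun _ q u => HopfAlgebra.sum_mul_mul_antipode_eq q.toRepr fun i => (u i).toRepr⟩
end

section
/- Let G be a group with identity e and H ≤ G a subgroup. For n ≥ 0 let X_n := {(g₀, …, g_n) ∈ G^{n+1} : g₀H = g₁H = ⋯ = g_nH} and Y_n := {(h₀, …, h_n) ∈ H^{n+1} : h₀h₁⋯h_n = e} × G. Then the maps Φ_n: Y_n → X_n, (h₀, …, h_n; g) ↦ (g, gh₀, gh₀h₁, …, gh₀⋯h_{n-1}), and Ψ_n: X_n → Y_n, (g₀, …, g_n) ↦ (g₀⁻¹g₁, g₁⁻¹g₂, …, g_n⁻¹g₀; g₀), are mutually inverse bijections, and they intertwine the cocyclic structures: on X_n the cofaces δ_i(g₀,…,g_n) = (g₀,…,g_i,g_i,…,g_n), codegeneracies σ_i(g₀,…,g_n) = (g₀,…,g_{i-1},g_{i+1},…,g_n),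 and cocyclic operator τ_n(g₀,g₁,…,g_n) = (g₁,…,g_n,g₀); on Y_n the cofaces δ_i(h₀,…,h_{n-1};g) = (h₀,…,h_{i-1},e,h_i,…,h_{n-1};g), codegeneracies σ_i(h₀,…,h_n;g) = (h₀,…,h_ih_{i+1},…,h_n;g), and cocyclic operator τ_n(h₀,h₁,…,h_n;g) = (h₁,…,h_n,h₀; gh₀). -/
/-!
STATEMENT 15: For a group `G` with subgroup `H`, the fiber powers
`X_n = {(g₀,…,g_n) : g₀H = ⋯ = g_nH}` and the spaces
`Y_n = {(h₀,…,h_n) ∈ H^{n+1} : h₀⋯h_n = e} × G` are mutually inverse bijective via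
`Φ(h₀,…,h_n;g) = (g, gh₀, gh₀h₁, …, gh₀⋯h_{n-1})` and
`Ψ(g₀,…,g_n) = (g₀⁻¹g₁, …, g_n⁻¹g₀; g₀)`, and these bijections intertwine the cocyclic
structures (cofaces `δ`, codegeneracies `σ`, cocyclic operators `τ`) of the two sides.
-/

open scoped Pointwise

variable {G : Type*} [Group G] (H : Subgroup G)

/-- `X n`: tuples `(g₀,…,g_n)` with `g₀H = g₁H = ⋯ = g_nH`. -/
def cechSet (n : ℕ) : Set (Fin (n + 1) → G) :=
  {x | ∀ i, (QuotientGroup.mk (x i) : G ⧸ H) = QuotientGroup.mk (x 0)}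

/-- `Y n`: pairs `((h₀,…,h_n), g)` with all `hᵢ ∈ H` and `h₀h₁⋯h_n = e`. -/
def fiberSet (n : ℕ) : Set ((Fin (n + 1) → G) × G) :=
  {p | (∀ i, p.1 i ∈ H) ∧ (List.ofFn p.1).prod = 1}

/-- `Φ (h₀,…,h_n; g) = (g, gh₀, gh₀h₁, …, gh₀⋯h_{n-1})`. -/
def PhiMap (n : ℕ) (p : (Fin (n + 1) → G) × G) : Fin (n + 1) → G :=
  fun i => p.2 * ((List.ofFn p.1).take (i : ℕ)).prod

/-- `Ψ (g₀,…,g_n) = ((g₀⁻¹g₁, g₁⁻¹g₂, …, g_n⁻¹g₀), g₀)` (indices cyclic). -/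
def PsiMap (n : ℕ) (x : Fin (n + 1) → G) : (Fin (n + 1) → G) × G :=
  (fun i => (x i)⁻¹ * x (i + 1), x 0)

/-!
Writing `Φ(h; g)ᵢ = g · (h₀⋯hᵢ₋₁)` as `g` times `Fin.partialProd h` at `i`, every claim is an
identity of partial products: `Ψ` takes consecutive quotients, which telescope back to the partial
products, and the codegeneracies are Mathlib's `Fin.partialProd_contractNth`. The relation
`h₀⋯hₙ = e` is what makes the indexing cyclic: the partial product of length `n + 1` equals the
empty one, so `Φ` and `Ψ` may treat the index `n + 1` as `0`.
-/

namespace Fin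

section Monoid

variable {M : Type*} [Monoid M]

theorem partialProd_mem {S : Type*} [SetLike S M] [SubmonoidClass S M] {s : S} {n : ℕ}
    {f : Fin n → M} (hf : ∀ i, f i ∈ s) (j : Fin (n + 1)) : partialProd f j ∈ s :=
  list_prod_mem fun _ hx ↦ by
    obtain ⟨i, rfl⟩ := List.mem_ofFn.mp (List.mem_of_mem_take hx)
    exact hf i

theorem partialProd_last {n : ℕ} (f : Fin n → M) :
    partialProd f (last n) = (List.ofFn f).prod := by
  simp [partialProd, List.take_of_length_le]

theorem partialProd_castSucc_add_one {n : ℕ} {f : Fin (n + 1) → M}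
    (hf : (List.ofFn f).prod = 1) (i : Fin (n + 1)) :
    partialProd f (i + 1).castSucc = partialProd f i.succ := by
  induction i using Fin.lastCases with
  | last => rw [last_add_one, succ_last, partialProd_last, hf, castSucc_zero, partialProd_zero]
  | cast i => rw [← castSucc_succ, coeSucc_eq_succ]

theorem partialProd_cons_one {n : ℕ} (f : Fin n → M) (j : Fin (n + 2)) :
    partialProd (cons 1 f) j = partialProd f (predAbove 0 j) := by
  induction j using Fin.cases with
  | zero => simp
  | succ j => rw [predAbove_zero_succ, partialProd_succ', cons_zero, tail_cons, one_mul]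

theorem partialProd_insertNth_one {n : ℕ} (i : Fin (n + 1)) (f : Fin n → M) (j : Fin (n + 2)) :
    partialProd (insertNth i 1 f) j = partialProd f (i.predAbove j) := by
  induction n with
  | zero => rw [fin_one_eq_zero i, insertNth_zero', partialProd_cons_one]
  | succ m ih =>
    induction i using Fin.cases with
    | zero => rw [insertNth_zero', partialProd_cons_one]
    | succ i =>
      rw [← cons_self_tail f, insertNth_succ_cons]
      induction j using Fin.cases with
      | zero => simp
      | succ j =>
        rw [succ_predAbove_succ, partialProd_succ', partialProd_succ', cons_zero, cons_zero,
          tail_cons, tail_cons, ih]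

theorem partialProd_add_one_castSucc {n : ℕ} (f : Fin (n + 1) → M) (j : Fin (n + 1)) :
    partialProd (fun i ↦ f (i + 1)) j.castSucc = partialProd (tail f) j := by
  rw [← partialProd_init]
  congr 1
  funext i
  simp [init, tail, coeSucc_eq_succ]

end Monoid

section Group

variable {n : ℕ}

theorem partialProd_inv_mul_add_one_castSucc (x : Fin (n + 1) → G) (k : Fin (n + 1)) :
    partialProd (fun i ↦ (x i)⁻¹ * x (i + 1)) k.castSucc = (x 0)⁻¹ * x k := by
  have hinit : init (fun i ↦ (x i)⁻¹ * x (i + 1)) = fun i ↦ (x i.castSucc)⁻¹ * x i.succ := by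
    funext i
    simp [init, coeSucc_eq_succ]
  rw [← partialProd_init, hinit, eq_inv_mul_iff_mul_eq]
  exact congrFun (partialProd_left_inv x) k

theorem prod_ofFn_inv_mul_add_one (x : Fin (n + 1) → G) :
    (List.ofFn fun i ↦ (x i)⁻¹ * x (i + 1)).prod = 1 := by
  rw [← partialProd_last, ← succ_last, partialProd_succ, partialProd_inv_mul_add_one_castSucc,
    last_add_one]
  group

end Group

end Fin

section

open Fin

variable {n : ℕ}

theorem phiMap_apply (p : (Fin (n + 1) → G) × G) (i : Fin (n + 1)) :
    PhiMap n p i = p.2 * partialProd p.1 i.castSucc :=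
  rfl

theorem mapsTo_phiMap : Set.MapsTo (PhiMap n) (fiberSet H n) (cechSet H n) := by
  rintro ⟨h, g⟩ ⟨hH, -⟩ i
  rw [phiMap_apply, phiMap_apply, castSucc_zero, partialProd_zero, mul_one,
    QuotientGroup.mk_mul_of_mem _ (partialProd_mem hH _)]

theorem mapsTo_psiMap : Set.MapsTo (PsiMap n) (cechSet H n) (fiberSet H n) :=
  fun x hx ↦
    ⟨fun i ↦ QuotientGroup.eq.mp ((hx i).trans (hx (i + 1)).symm), prod_ofFn_inv_mul_add_one x⟩

theorem psiMap_phiMap {p : (Fin (n + 1) → G) × G} (hp : p ∈ fiberSet H n) :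
    PsiMap n (PhiMap n p) = p := by
  refine Prod.ext (funext fun i ↦ ?_) ?_
  · simp only [PsiMap, phiMap_apply, partialProd_castSucc_add_one hp.2, mul_inv_rev,
      mul_assoc, inv_mul_cancel_left, partialProd_right_inv]
  · simp [PsiMap, phiMap_apply]

theorem phiMap_psiMap (x : Fin (n + 1) → G) : PhiMap n (PsiMap n x) = x :=
  funext fun k ↦ by
    rw [phiMap_apply, PsiMap, partialProd_inv_mul_add_one_castSucc, mul_inv_cancel_left]

theorem phiMap_insertNth_one (i : Fin (n + 1)) (p : (Fin (n + 1) → G) × G) :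
    PhiMap (n + 1) (insertNth i.castSucc 1 p.1, p.2) = PhiMap n p ∘ i.predAbove :=
  funext fun j ↦ by
    rw [phiMap_apply, Function.comp_apply, phiMap_apply, partialProd_insertNth_one,
      castSucc_predAbove_castSucc]

theorem phiMap_contractNth (i : Fin (n + 1)) (p : (Fin (n + 2) → G) × G) :
    PhiMap n (contractNth i.castSucc (· * ·) p.1, p.2) = PhiMap (n + 1) p ∘ i.succ.succAbove :=
  funext fun j ↦ by
    rw [phiMap_apply, Function.comp_apply, phiMap_apply, partialProd_contractNth,
      Function.comp_apply, succ_castSucc, castSucc_succAbove_castSucc]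

theorem phiMap_rotate {p : (Fin (n + 1) → G) × G} (hp : p ∈ fiberSet H n) :
    PhiMap n (fun i ↦ p.1 (i + 1), p.2 * p.1 0) = fun i ↦ PhiMap n p (i + 1) :=
  funext fun j ↦ by
    rw [phiMap_apply, phiMap_apply, partialProd_add_one_castSucc,
      partialProd_castSucc_add_one hp.2, partialProd_succ', mul_assoc]

end

theorem cech_fiber_cocyclic_iso (n : ℕ) :
    -- mutually inverse bijections
    Set.MapsTo (PhiMap n) (fiberSet H n) (cechSet H n) ∧
    Set.MapsTo (PsiMap n) (cechSet H n) (fiberSet H n) ∧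
    (∀ p ∈ fiberSet H n, PsiMap n (PhiMap n p) = p) ∧
    (∀ x ∈ cechSet H n, PhiMap n (PsiMap n x) = x) ∧
    -- cofaces: `δᵢ` duplicates `gᵢ` on `X`, inserts `e` at slot `i` on `Y`
    (∀ (i : Fin (n + 1)), ∀ p ∈ fiberSet H n,
      PhiMap (n + 1) (Fin.insertNth i.castSucc (1 : G) p.1, p.2)
        = (PhiMap n p) ∘ (Fin.predAbove i)) ∧
    -- codegeneracies: `σᵢ` multiplies `hᵢhᵢ₊₁` on `Y`; on `X` it deletes an entry
    (∀ (i : Fin (n + 1)), ∀ p ∈ fiberSet H (n + 1),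
      PhiMap n
        ((fun j : Fin (n + 1) =>
            if (j : ℕ) < (i : ℕ) then p.1 j.castSucc
            else if j = i then p.1 i.castSucc * p.1 i.succ
            else p.1 j.succ), p.2)
        = (PhiMap (n + 1) p) ∘ (Fin.succAbove i.succ)) ∧
    -- cocyclic operators: `τ(h₀,…,h_n;g) = (h₁,…,h_n,h₀; gh₀)`, `τ(g₀,…,g_n) = (g₁,…,g_n,g₀)`
    (∀ p ∈ fiberSet H n,
      PhiMap n (fun i => p.1 (i + 1), p.2 * p.1 0)
        = fun i => PhiMap n p (i + 1)) := by
  refine ⟨mapsTo_phiMap H, mapsTo_psiMap H, fun p hp ↦ psiMap_phiMap H hp,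
    fun x _ ↦ phiMap_psiMap x, fun i p _ ↦ phiMap_insertNth_one i p, fun i p _ ↦ ?_,
    fun p hp ↦ phiMap_rotate H hp⟩
  convert phiMap_contractNth i p using 4 with j
  simp only [Fin.contractNth, Fin.val_castSucc, Fin.val_inj]
  grind
end
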